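/- arXiv:2112.02005 — 10 statements merged into one kernel-verified Lean document; each statement's English description precedes it below -/
import Mathlib

section
/- Input-Output Parameterization, algebraic core (Corollary 2): Over a commutative ring K let G : p×m, Y : p×p, W : p×m, U : m×p, Z : m×m be matrices satisfying the IOP affine constraints Y − G*U = 1, W − G*Z = 0, −Y*G + W = 0, −U*G + Z = 1, with Y invertible. Then the controller K := U * Y⁻¹ makes Matrix.fromBlocks Y W U Z a two-sided inverse of Matrix.fromBlocks 1 (−G) (−K) 1: (fromBlocks 1 (−G) (−K) 1) * (fromBlocks Y W U Z) = 1 and (fromBlocks Y W U Z) * (fromBlocks 1 (−G) (−K) 1) = 1. -/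
/-- **Input-Output Parameterization, algebraic core** (Corollary 2).  If the IOP
parameters `(Y, W, U, Z)` satisfy the affine constraints `Y - G U = 1`, `W - G Z = 0`,
`-Y G + W = 0`, `-U G + Z = 1` with `Y` invertible, then `K := U * Y⁻¹` makes
`[[Y, W],[U, Z]]` a two-sided inverse of `[[1, -G],[-K, 1]]`. -/
theorem iop_parameterization {p m K : Type*} [Fintype p] [Fintype m]
    [DecidableEq p] [DecidableEq m] [CommRing K]
    (G : Matrix p m K) (Y : Matrix p p K) (W : Matrix p m K)
    (U : Matrix m p K) (Z : Matrix m m K)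
    (h₁ : Y - G * U = 1) (h₂ : W - G * Z = 0)
    (h₃ : -(Y * G) + W = 0) (h₄ : -(U * G) + Z = 1)
    (hY : IsUnit Y) :
    let Kc := U * Y⁻¹
    Matrix.fromBlocks 1 (-G) (-Kc) 1 * Matrix.fromBlocks Y W U Z = 1 ∧
    Matrix.fromBlocks Y W U Z * Matrix.fromBlocks 1 (-G) (-Kc) 1 = 1 := by
  intro Kc
  have hdet : IsUnit Y.det := (Matrix.isUnit_iff_isUnit_det Y).mp hY
  have hYl : Y⁻¹ * Y = 1 := Matrix.nonsing_inv_mul Y hdet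
  have hYr : Y * Y⁻¹ = 1 := Matrix.mul_nonsing_inv Y hdet
  have hW : W = Y * G := by linear_combination (norm := noncomm_ring) h₃
  have hGU : G * U = Y - 1 := by linear_combination (norm := noncomm_ring) - h₁
  have hZ : Z = 1 + U * G := by linear_combination (norm := noncomm_ring) h₄
  have hKcY : Kc * Y = U := by
    show U * Y⁻¹ * Y = U
    rw [Matrix.mul_assoc, hYl, Matrix.mul_one]
  have hKcW : Kc * W = U * G := by
    show U * Y⁻¹ * W = U * G
    rw [hW, Matrix.mul_assoc, ← Matrix.mul_assoc Y⁻¹, hYl, Matrix.one_mul]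
  have hWKc : W * Kc = Y - 1 := by
    show W * (U * Y⁻¹) = Y - 1
    rw [hW, Matrix.mul_assoc, ← Matrix.mul_assoc G, hGU, Matrix.sub_mul,
      Matrix.mul_sub, hYr, Matrix.one_mul, Matrix.mul_one, hYr]
  have hZKc : Z * Kc = U := by
    show Z * (U * Y⁻¹) = U
    rw [hZ, Matrix.add_mul, Matrix.one_mul, Matrix.mul_assoc U G,
      ← Matrix.mul_assoc G, hGU, Matrix.sub_mul, hYr, Matrix.mul_sub,
      Matrix.mul_one, Matrix.one_mul]
    abel
  constructor
  · rw [Matrix.fromBlocks_multiply, ← Matrix.fromBlocks_one]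
    rw [Matrix.fromBlocks_inj]
    refine ⟨?_, ?_, ?_, ?_⟩
    · simpa [Matrix.neg_mul, ← sub_eq_add_neg] using h₁
    · simpa [Matrix.neg_mul, ← sub_eq_add_neg] using h₂
    · simp [Matrix.neg_mul, hKcY]
    · simpa [Matrix.neg_mul, hKcW] using h₄
  · rw [Matrix.fromBlocks_multiply, ← Matrix.fromBlocks_one]
    rw [Matrix.fromBlocks_inj]
    refine ⟨?_, ?_, ?_, ?_⟩
    · rw [Matrix.mul_one, Matrix.mul_neg, hWKc]; abel
    · simpa [Matrix.mul_neg] using h₃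
    · simp [Matrix.mul_neg, hZKc]
    · simpa [Matrix.mul_neg] using h₄
end

section
/- State-feedback System Level Parameterization, algebraic core (Corollary 3): Let K := RatFunc ℝ with z := RatFunc.X, let A : n×n and B : n×m be real matrices regarded over K, and let Φx : n×n, Φu : m×n be matrices over K satisfying the SLP constraint (z•1 − A) * Φx − B * Φu = 1 with Φx invertible. Then the controller K := Φu * Φx⁻¹ makes Matrix.fromBlocks (z•1 − A) (−B) (−K) 1 invertible with two-sided inverse Matrix.fromBlocks Φx (Φx * B) Φu (1 + Φu * B). -/
open Matrix

noncomputable section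

set_option synthInstance.maxHeartbeats 1000000

/-- A real constant matrix regarded as a matrix of rational transfer functions. -/
def mR {n m : Type*} (M : Matrix n m ℝ) : Matrix n m (RatFunc ℝ) :=
  M.map (algebraMap ℝ (RatFunc ℝ))

/-- The transfer-function variable `z`. -/
def zz : RatFunc ℝ := RatFunc.X

set_option maxHeartbeats 1600000 in
/-- **State-feedback System Level Parameterization, algebraic core** (Corollary 3).
If `(Φx, Φu)` satisfy the SLP constraint `(z•1 - A) Φx - B Φu = 1` with `Φx`
invertible, then the controller `K := Φu Φx⁻¹` makes
`[[z•1 - A, -B],[-K, 1]]` invertible with two-sided inverse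
`[[Φx, Φx B],[Φu, 1 + Φu B]]`. -/
theorem sf_slp {n m : Type*} [Fintype n] [Fintype m] [DecidableEq n] [DecidableEq m]
    (A : Matrix n n ℝ) (B : Matrix n m ℝ)
    (Φx : Matrix n n (RatFunc ℝ)) (Φu : Matrix m n (RatFunc ℝ))
    (hSLP : (zz • (1 : Matrix n n (RatFunc ℝ)) - mR A) * Φx - mR B * Φu = 1)
    (hΦx : IsUnit Φx) :
    let Kc := Φu * Φx⁻¹
    Matrix.fromBlocks (zz • (1 : Matrix n n (RatFunc ℝ)) - mR A) (-(mR B)) (-Kc) 1 *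
      Matrix.fromBlocks Φx (Φx * mR B) Φu (1 + Φu * mR B) = 1 ∧
    Matrix.fromBlocks Φx (Φx * mR B) Φu (1 + Φu * mR B) *
      Matrix.fromBlocks (zz • (1 : Matrix n n (RatFunc ℝ)) - mR A) (-(mR B)) (-Kc) 1
      = 1 := by
  intro Kc
  have hdet : IsUnit Φx.det := (Matrix.isUnit_iff_isUnit_det _).mp hΦx
  have h1 : Φx * Φx⁻¹ = 1 := Matrix.mul_nonsing_inv _ hdet
  have h2 : Φx⁻¹ * Φx = 1 := Matrix.nonsing_inv_mul _ hdet
  set Z := zz • (1 : Matrix n n (RatFunc ℝ)) - mR A with hZdef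
  have hZ1 : Z * Φx = 1 + mR B * Φu := by rw [← hSLP]; abel
  have hB : mR B * Φu = Z * Φx - 1 := by rw [hZ1]; abel
  have hK : Φu * Φx⁻¹ * Φx = Φu := by rw [Matrix.mul_assoc, h2, Matrix.mul_one]
  have e1 : Φx * mR B * Φu = Φx * Z * Φx - Φx := by
    rw [Matrix.mul_assoc, hB, Matrix.mul_sub, Matrix.mul_one, ← Matrix.mul_assoc]
  have e2 : Φu * mR B * Φu = Φu * Z * Φx - Φu := by
    rw [Matrix.mul_assoc, hB, Matrix.mul_sub, Matrix.mul_one, ← Matrix.mul_assoc]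
  have e3 : Φx * Z * Φx * Φx⁻¹ = Φx * Z := by rw [Matrix.mul_assoc, h1, Matrix.mul_one]
  have e4 : Φu * Z * Φx * Φx⁻¹ = Φu * Z := by rw [Matrix.mul_assoc, h1, Matrix.mul_one]
  constructor <;>
    rw [Matrix.fromBlocks_multiply, ← Matrix.fromBlocks_one,
      Matrix.fromBlocks_inj] <;> refine ⟨?_, ?_, ?_, ?_⟩
  · rw [Matrix.neg_mul, ← sub_eq_add_neg, hSLP]
  · rw [← Matrix.mul_assoc, hZ1, Matrix.neg_mul, Matrix.mul_add, Matrix.mul_one,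
      Matrix.add_mul, Matrix.one_mul, ← Matrix.mul_assoc]
    abel
  · rw [Matrix.one_mul, Matrix.neg_mul, hK]; abel
  · rw [Matrix.one_mul, Matrix.neg_mul, ← Matrix.mul_assoc, hK]; abel
  · show Φx * Z + Φx * mR B * -Kc = 1
    rw [Matrix.mul_neg, show Kc = Φu * Φx⁻¹ from rfl, ← Matrix.mul_assoc, e1,
      Matrix.sub_mul, e3, h1]
    abel
  · show Φx * -(mR B) + Φx * mR B * 1 = 0
    rw [Matrix.mul_one, Matrix.mul_neg]; abel
  · show Φu * Z + (1 + Φu * mR B) * -Kc = 0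
    rw [Matrix.mul_neg, show Kc = Φu * Φx⁻¹ from rfl, Matrix.add_mul, Matrix.one_mul,
      ← Matrix.mul_assoc, e2, Matrix.sub_mul, e4]
    abel
  · show Φu * -(mR B) + (1 + Φu * mR B) * 1 = 1
    rw [Matrix.mul_one, Matrix.mul_neg]; abel

end
end

section
/- Output-feedback stability matrix completion (equations (15)–(16), proof of Corollaries 4–5): Suppose S is a stability matrix for the output-feedback realization R with controller K. Then the remaining blocks of S are determined by (Φxx, Φux, Φxy, Φuy): Syx = C*Φxx + D*Φux, Syy = C*Φxy + D*Φuy + 1, Sxu = Φxx*B + Φxy*D, Suu = 1 + Φux*B + Φuy*D, and Syu = Syx*B + Syy*D. Moreover Φux = K * Syx and Φuy = K * Syy. -/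
open Matrix

noncomputable section

set_option synthInstance.maxHeartbeats 1000000
set_option maxHeartbeats 1000000

/-- A 3×3 block matrix. -/
def b3 {α n₁ n₂ n₃ m₁ m₂ m₃ : Type*}
    (M₁₁ : Matrix n₁ m₁ α) (M₁₂ : Matrix n₁ m₂ α) (M₁₃ : Matrix n₁ m₃ α)
    (M₂₁ : Matrix n₂ m₁ α) (M₂₂ : Matrix n₂ m₂ α) (M₂₃ : Matrix n₂ m₃ α)
    (M₃₁ : Matrix n₃ m₁ α) (M₃₂ : Matrix n₃ m₂ α) (M₃₃ : Matrix n₃ m₃ α) :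
    Matrix (n₁ ⊕ n₂ ⊕ n₃) (m₁ ⊕ m₂ ⊕ m₃) α :=
  Matrix.fromBlocks M₁₁ (Matrix.fromCols M₁₂ M₁₃)
    (Matrix.fromRows M₂₁ M₃₁) (Matrix.fromBlocks M₂₂ M₂₃ M₃₂ M₃₃)

/-!
Only the `u`- and `y`-block rows of `(1 - R) S = 1` and the `u`-block column of
`S (1 - R) = 1` are needed. Since the `u`-row of `1 - R` is `[0, 1, -K]` and its `y`-row is
`[-C, -D, 1]`, the first gives `Φu• = K Sy•` and `Sy• = C Φx• + D Φu• + [0, 0, 1]`; since the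
`u`-column of `1 - R` is `[-B, 1, -D]ᵀ`, the second gives `S•u = S•x B + S•y D + [0, 1, 0]ᵀ`.
Combining the two for the corner block gives `Syu = Syx B + Syy D`. None of this involves the
`x`-block of `R`, so it holds for block matrices over an arbitrary ring.
-/

namespace Matrix

variable {α n₁ n₂ m₁ m₂ : Type*}

lemma fromCols_add [Add α] (A₁ B₁ : Matrix n₁ m₁ α) (A₂ B₂ : Matrix n₁ m₂ α) :
    fromCols A₁ A₂ + fromCols B₁ B₂ = fromCols (A₁ + B₁) (A₂ + B₂) := by
  ext _ (j | j) <;> rfl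

lemma fromRows_add [Add α] (A₁ B₁ : Matrix n₁ m₁ α) (A₂ B₂ : Matrix n₂ m₁ α) :
    fromRows A₁ A₂ + fromRows B₁ B₂ = fromRows (A₁ + B₁) (A₂ + B₂) := by
  ext (i | i) _ <;> rfl

end Matrix

section BlockMatrix3

variable {α n₁ n₂ n₃ m₁ m₂ m₃ l₁ l₂ l₃ : Type*}

lemma b3_inj {M₁₁ N₁₁ : Matrix n₁ m₁ α} {M₁₂ N₁₂ : Matrix n₁ m₂ α} {M₁₃ N₁₃ : Matrix n₁ m₃ α}
    {M₂₁ N₂₁ : Matrix n₂ m₁ α} {M₂₂ N₂₂ : Matrix n₂ m₂ α} {M₂₃ N₂₃ : Matrix n₂ m₃ α}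
    {M₃₁ N₃₁ : Matrix n₃ m₁ α} {M₃₂ N₃₂ : Matrix n₃ m₂ α} {M₃₃ N₃₃ : Matrix n₃ m₃ α} :
    b3 M₁₁ M₁₂ M₁₃ M₂₁ M₂₂ M₂₃ M₃₁ M₃₂ M₃₃ = b3 N₁₁ N₁₂ N₁₃ N₂₁ N₂₂ N₂₃ N₃₁ N₃₂ N₃₃ ↔
      M₁₁ = N₁₁ ∧ M₁₂ = N₁₂ ∧ M₁₃ = N₁₃ ∧ M₂₁ = N₂₁ ∧ M₂₂ = N₂₂ ∧ M₂₃ = N₂₃ ∧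
      M₃₁ = N₃₁ ∧ M₃₂ = N₃₂ ∧ M₃₃ = N₃₃ := by
  rw [b3, b3, fromBlocks_inj, fromCols_ext_iff, fromRows_ext_iff, fromBlocks_inj]
  tauto

lemma b3_one [DecidableEq n₁] [DecidableEq n₂] [DecidableEq n₃] [Semiring α] :
    b3 (1 : Matrix n₁ n₁ α) 0 0 0 (1 : Matrix n₂ n₂ α) 0 0 0 (1 : Matrix n₃ n₃ α) = 1 := by
  rw [b3, fromCols_zero, fromRows_zero, fromBlocks_one, fromBlocks_one]

lemma one_sub_b3 [DecidableEq n₁] [DecidableEq n₂] [DecidableEq n₃] [AddGroupWithOne α]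
    (M₁₁ : Matrix n₁ n₁ α) (M₁₂ : Matrix n₁ n₂ α) (M₁₃ : Matrix n₁ n₃ α)
    (M₂₁ : Matrix n₂ n₁ α) (M₂₂ : Matrix n₂ n₂ α) (M₂₃ : Matrix n₂ n₃ α)
    (M₃₁ : Matrix n₃ n₁ α) (M₃₂ : Matrix n₃ n₂ α) (M₃₃ : Matrix n₃ n₃ α) :
    1 - b3 M₁₁ M₁₂ M₁₃ M₂₁ M₂₂ M₂₃ M₃₁ M₃₂ M₃₃ =
      b3 (1 - M₁₁) (-M₁₂) (-M₁₃) (-M₂₁) (1 - M₂₂) (-M₂₃) (-M₃₁) (-M₃₂) (1 - M₃₃) := by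
  ext (i | i | i) (j | j | j) <;>
    simp [b3, fromBlocks, fromCols, fromRows_apply_inl, fromRows_apply_inr, one_apply]

lemma b3_mul_b3 [Fintype n₁] [Fintype n₂] [Fintype n₃] [Semiring α]
    (A₁₁ : Matrix m₁ n₁ α) (A₁₂ : Matrix m₁ n₂ α) (A₁₃ : Matrix m₁ n₃ α)
    (A₂₁ : Matrix m₂ n₁ α) (A₂₂ : Matrix m₂ n₂ α) (A₂₃ : Matrix m₂ n₃ α)
    (A₃₁ : Matrix m₃ n₁ α) (A₃₂ : Matrix m₃ n₂ α) (A₃₃ : Matrix m₃ n₃ α)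
    (B₁₁ : Matrix n₁ l₁ α) (B₁₂ : Matrix n₁ l₂ α) (B₁₃ : Matrix n₁ l₃ α)
    (B₂₁ : Matrix n₂ l₁ α) (B₂₂ : Matrix n₂ l₂ α) (B₂₃ : Matrix n₂ l₃ α)
    (B₃₁ : Matrix n₃ l₁ α) (B₃₂ : Matrix n₃ l₂ α) (B₃₃ : Matrix n₃ l₃ α) :
    b3 A₁₁ A₁₂ A₁₃ A₂₁ A₂₂ A₂₃ A₃₁ A₃₂ A₃₃ * b3 B₁₁ B₁₂ B₁₃ B₂₁ B₂₂ B₂₃ B₃₁ B₃₂ B₃₃ =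
      b3 (A₁₁ * B₁₁ + (A₁₂ * B₂₁ + A₁₃ * B₃₁))
         (A₁₁ * B₁₂ + (A₁₂ * B₂₂ + A₁₃ * B₃₂))
         (A₁₁ * B₁₃ + (A₁₂ * B₂₃ + A₁₃ * B₃₃))
         (A₂₁ * B₁₁ + (A₂₂ * B₂₁ + A₂₃ * B₃₁))
         (A₂₁ * B₁₂ + (A₂₂ * B₂₂ + A₂₃ * B₃₂))
         (A₂₁ * B₁₃ + (A₂₂ * B₂₃ + A₂₃ * B₃₃))
         (A₃₁ * B₁₁ + (A₃₂ * B₂₁ + A₃₃ * B₃₁))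
         (A₃₁ * B₁₂ + (A₃₂ * B₂₂ + A₃₃ * B₃₂))
         (A₃₁ * B₁₃ + (A₃₂ * B₂₃ + A₃₃ * B₃₃)) := by
  unfold b3
  rw [fromBlocks_multiply, fromCols_mul_fromRows, mul_fromCols,
    fromCols_mul_fromBlocks, fromCols_add, fromRows_mul, fromBlocks_mul_fromRows,
    fromRows_add, fromRows_mul_fromCols, fromBlocks_multiply, fromBlocks_add]

end BlockMatrix3

section OutputFeedback

variable {α n m p : Type*} [Ring α] [Fintype n] [Fintype m] [Fintype p]
  [DecidableEq n] [DecidableEq m] [DecidableEq p]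
  {Axx : Matrix n n α} {B : Matrix n m α} {C : Matrix p n α} {D : Matrix p m α}
  {K : Matrix m p α}
  {Φxx : Matrix n n α} {Sxu : Matrix n m α} {Φxy : Matrix n p α}
  {Φux : Matrix m n α} {Suu : Matrix m m α} {Φuy : Matrix m p α}
  {Syx : Matrix p n α} {Syu : Matrix p m α} {Syy : Matrix p p α}

lemma outputFeedback_rows_of_mul_eq_one
    (h : (1 - b3 Axx B 0 0 0 K C D 0) * b3 Φxx Sxu Φxy Φux Suu Φuy Syx Syu Syy = 1) :
    Φux = K * Syx ∧ Φuy = K * Syy ∧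
    Syx = C * Φxx + D * Φux ∧ Syu = C * Sxu + D * Suu ∧ Syy = C * Φxy + D * Φuy + 1 := by
  rw [one_sub_b3, b3_mul_b3, ← b3_one, b3_inj] at h
  obtain ⟨-, -, -, hux, -, huy, hyx, hyu, hyy⟩ := h
  simp only [Matrix.zero_mul, Matrix.neg_mul, Matrix.one_mul, neg_zero, zero_add, sub_zero]
    at hux huy hyx hyu hyy
  refine ⟨?_, ?_, ?_, ?_, ?_⟩
  · rwa [add_neg_eq_zero] at hux
  · rwa [add_neg_eq_zero] at huy
  · linear_combination (norm := abel1) hyx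
  · linear_combination (norm := abel1) hyu
  · linear_combination (norm := abel1) hyy

lemma outputFeedback_cols_of_mul_eq_one
    (h : b3 Φxx Sxu Φxy Φux Suu Φuy Syx Syu Syy * (1 - b3 Axx B 0 0 0 K C D 0) = 1) :
    Sxu = Φxx * B + Φxy * D ∧ Suu = 1 + Φux * B + Φuy * D := by
  rw [one_sub_b3, b3_mul_b3, ← b3_one, b3_inj] at h
  obtain ⟨-, hxu, -, -, huu, -, -, -, -⟩ := h
  simp only [Matrix.mul_neg, Matrix.mul_one, sub_zero]
    at hxu huu
  constructor
  · linear_combination (norm := abel1) hxu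
  · linear_combination (norm := abel1) huu

theorem outputFeedback_stability_completion
    (hL : (1 - b3 Axx B 0 0 0 K C D 0) * b3 Φxx Sxu Φxy Φux Suu Φuy Syx Syu Syy = 1)
    (hR : b3 Φxx Sxu Φxy Φux Suu Φuy Syx Syu Syy * (1 - b3 Axx B 0 0 0 K C D 0) = 1) :
    Syx = C * Φxx + D * Φux ∧ Syy = C * Φxy + D * Φuy + 1 ∧
    Sxu = Φxx * B + Φxy * D ∧ Suu = 1 + Φux * B + Φuy * D ∧
    Syu = Syx * B + Syy * D ∧ Φux = K * Syx ∧ Φuy = K * Syy := by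
  obtain ⟨hux, huy, hyx, hyu, hyy⟩ := outputFeedback_rows_of_mul_eq_one hL
  obtain ⟨hxu, huu⟩ := outputFeedback_cols_of_mul_eq_one hR
  refine ⟨hyx, hyy, hxu, huu, ?_, hux, huy⟩
  calc Syu = C * (Φxx * B + Φxy * D) + D * (1 + Φux * B + Φuy * D) := by rw [hyu, hxu, huu]
    _ = (C * Φxx + D * Φux) * B + (C * Φxy + D * Φuy + 1) * D := by
      simp only [Matrix.mul_add, Matrix.add_mul, Matrix.mul_one, Matrix.one_mul, Matrix.mul_assoc]
      abel
    _ = Syx * B + Syy * D := by rw [← hyx, ← hyy]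

end OutputFeedback

/-- **Output-feedback stability matrix completion** (equations (15)–(16)).
If `S = [[Φxx, Sxu, Φxy],[Φux, Suu, Φuy],[Syx, Syu, Syy]]` is a two-sided inverse
of `1 - R` for the output-feedback realization
`R = [[A + (1-z)·1, B, 0],[0, 0, K],[C, D, 0]]`, then the remaining blocks of `S`
are determined by `(Φxx, Φux, Φxy, Φuy)`. -/
theorem of_stability_completion {n m p : Type*} [Fintype n] [Fintype m] [Fintype p]
    [DecidableEq n] [DecidableEq m] [DecidableEq p]
    (A : Matrix n n ℝ) (B : Matrix n m ℝ) (C : Matrix p n ℝ) (D : Matrix p m ℝ)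
    (K : Matrix m p (RatFunc ℝ))
    (Φxx : Matrix n n (RatFunc ℝ)) (Sxu : Matrix n m (RatFunc ℝ)) (Φxy : Matrix n p (RatFunc ℝ))
    (Φux : Matrix m n (RatFunc ℝ)) (Suu : Matrix m m (RatFunc ℝ)) (Φuy : Matrix m p (RatFunc ℝ))
    (Syx : Matrix p n (RatFunc ℝ)) (Syu : Matrix p m (RatFunc ℝ)) (Syy : Matrix p p (RatFunc ℝ))
    (hL : (1 - b3 (mR A + (1 - zz) • (1 : Matrix n n (RatFunc ℝ))) (mR B)
            (0 : Matrix n p (RatFunc ℝ))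
            (0 : Matrix m n (RatFunc ℝ)) (0 : Matrix m m (RatFunc ℝ)) K
            (mR C) (mR D) (0 : Matrix p p (RatFunc ℝ))) *
          b3 Φxx Sxu Φxy Φux Suu Φuy Syx Syu Syy = 1)
    (hR : b3 Φxx Sxu Φxy Φux Suu Φuy Syx Syu Syy *
          (1 - b3 (mR A + (1 - zz) • (1 : Matrix n n (RatFunc ℝ))) (mR B)
            (0 : Matrix n p (RatFunc ℝ))
            (0 : Matrix m n (RatFunc ℝ)) (0 : Matrix m m (RatFunc ℝ)) K
            (mR C) (mR D) (0 : Matrix p p (RatFunc ℝ))) = 1) :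
    Syx = mR C * Φxx + mR D * Φux ∧
    Syy = mR C * Φxy + mR D * Φuy + 1 ∧
    Sxu = Φxx * mR B + Φxy * mR D ∧
    Suu = 1 + Φux * mR B + Φuy * mR D ∧
    Syu = Syx * mR B + Syy * mR D ∧
    Φux = K * Syx ∧ Φuy = K * Syy :=
  outputFeedback_stability_completion hL hR

end
end

section
/- Output-feedback SLS controller formula for general direct feedthrough D (Corollary 5): Suppose S is a stability matrix for the output-feedback realization R with controller K, and assume Φxx is invertible. Then Syy − Syx * Φxx⁻¹ * Φxy is invertible; setting K₀ := Φuy − Φux * Φxx⁻¹ * Φxy, the matrix 1 + D * K₀ is invertible and the controller satisfies K = K₀ * (1 + D * K₀)⁻¹. -/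
/-!
Read off the second and third block rows of `(1 - R) S = 1`: they say `Φux = K Syx`,
`Φuy = K Syy`, `Syx = C Φxx + D Φux` and `Syy = 1 + C Φxy + D Φuy`. Substituting the last two
into the Schur complement `P := Syy - Syx Φxx⁻¹ Φxy` cancels the `C`-terms, so `P = 1 + D K₀`;
substituting the first two gives `K₀ = K P`. Hence `P = 1 + D K P`, i.e. `(1 - D K) P = 1`, so `P`
is invertible and `K = K₀ P⁻¹`.
-/

open Matrix

noncomputable section

set_option synthInstance.maxHeartbeats 1000000
set_option maxHeartbeats 1000000

section BlockMatrix

variable {α n₁ n₂ n₃ m₁ m₂ m₃ l₁ l₂ l₃ : Type*}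

theorem b3_mul [NonUnitalNonAssocSemiring α] [Fintype m₁] [Fintype m₂] [Fintype m₃]
    (A₁₁ : Matrix n₁ m₁ α) (A₁₂ : Matrix n₁ m₂ α) (A₁₃ : Matrix n₁ m₃ α)
    (A₂₁ : Matrix n₂ m₁ α) (A₂₂ : Matrix n₂ m₂ α) (A₂₃ : Matrix n₂ m₃ α)
    (A₃₁ : Matrix n₃ m₁ α) (A₃₂ : Matrix n₃ m₂ α) (A₃₃ : Matrix n₃ m₃ α)
    (B₁₁ : Matrix m₁ l₁ α) (B₁₂ : Matrix m₁ l₂ α) (B₁₃ : Matrix m₁ l₃ α)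
    (B₂₁ : Matrix m₂ l₁ α) (B₂₂ : Matrix m₂ l₂ α) (B₂₃ : Matrix m₂ l₃ α)
    (B₃₁ : Matrix m₃ l₁ α) (B₃₂ : Matrix m₃ l₂ α) (B₃₃ : Matrix m₃ l₃ α) :
    b3 A₁₁ A₁₂ A₁₃ A₂₁ A₂₂ A₂₃ A₃₁ A₃₂ A₃₃ * b3 B₁₁ B₁₂ B₁₃ B₂₁ B₂₂ B₂₃ B₃₁ B₃₂ B₃₃ =
      b3 (A₁₁ * B₁₁ + A₁₂ * B₂₁ + A₁₃ * B₃₁) (A₁₁ * B₁₂ + A₁₂ * B₂₂ + A₁₃ * B₃₂)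
        (A₁₁ * B₁₃ + A₁₂ * B₂₃ + A₁₃ * B₃₃)
        (A₂₁ * B₁₁ + A₂₂ * B₂₁ + A₂₃ * B₃₁) (A₂₁ * B₁₂ + A₂₂ * B₂₂ + A₂₃ * B₃₂)
        (A₂₁ * B₁₃ + A₂₂ * B₂₃ + A₂₃ * B₃₃)
        (A₃₁ * B₁₁ + A₃₂ * B₂₁ + A₃₃ * B₃₁) (A₃₁ * B₁₂ + A₃₂ * B₂₂ + A₃₃ * B₃₂)
        (A₃₁ * B₁₃ + A₃₂ * B₂₃ + A₃₃ * B₃₃) := by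
  ext (i | i | i) (j | j | j) <;>
    simp [b3, fromBlocks, Matrix.mul_apply, Fintype.sum_sum_type, add_assoc]

theorem b3_one_s9 [Zero α] [One α] [DecidableEq m₁] [DecidableEq m₂] [DecidableEq m₃] :
    b3 (1 : Matrix m₁ m₁ α) 0 0 0 (1 : Matrix m₂ m₂ α) 0 0 0 (1 : Matrix m₃ m₃ α) = 1 := by
  ext (i | i | i) (j | j | j) <;> simp [b3, fromBlocks, one_apply]

theorem b3_sub [Sub α]
    (A₁₁ B₁₁ : Matrix n₁ m₁ α) (A₁₂ B₁₂ : Matrix n₁ m₂ α) (A₁₃ B₁₃ : Matrix n₁ m₃ α)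
    (A₂₁ B₂₁ : Matrix n₂ m₁ α) (A₂₂ B₂₂ : Matrix n₂ m₂ α) (A₂₃ B₂₃ : Matrix n₂ m₃ α)
    (A₃₁ B₃₁ : Matrix n₃ m₁ α) (A₃₂ B₃₂ : Matrix n₃ m₂ α) (A₃₃ B₃₃ : Matrix n₃ m₃ α) :
    b3 A₁₁ A₁₂ A₁₃ A₂₁ A₂₂ A₂₃ A₃₁ A₃₂ A₃₃ - b3 B₁₁ B₁₂ B₁₃ B₂₁ B₂₂ B₂₃ B₃₁ B₃₂ B₃₃ =
      b3 (A₁₁ - B₁₁) (A₁₂ - B₁₂) (A₁₃ - B₁₃) (A₂₁ - B₂₁) (A₂₂ - B₂₂) (A₂₃ - B₂₃)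
        (A₃₁ - B₃₁) (A₃₂ - B₃₂) (A₃₃ - B₃₃) := by
  ext (i | i | i) (j | j | j) <;> simp [b3, fromBlocks]

theorem b3_inj_s9
    {A₁₁ B₁₁ : Matrix n₁ m₁ α} {A₁₂ B₁₂ : Matrix n₁ m₂ α} {A₁₃ B₁₃ : Matrix n₁ m₃ α}
    {A₂₁ B₂₁ : Matrix n₂ m₁ α} {A₂₂ B₂₂ : Matrix n₂ m₂ α} {A₂₃ B₂₃ : Matrix n₂ m₃ α}
    {A₃₁ B₃₁ : Matrix n₃ m₁ α} {A₃₂ B₃₂ : Matrix n₃ m₂ α} {A₃₃ B₃₃ : Matrix n₃ m₃ α} :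
    b3 A₁₁ A₁₂ A₁₃ A₂₁ A₂₂ A₂₃ A₃₁ A₃₂ A₃₃ = b3 B₁₁ B₁₂ B₁₃ B₂₁ B₂₂ B₂₃ B₃₁ B₃₂ B₃₃ ↔
      A₁₁ = B₁₁ ∧ A₁₂ = B₁₂ ∧ A₁₃ = B₁₃ ∧ A₂₁ = B₂₁ ∧ A₂₂ = B₂₂ ∧ A₂₃ = B₂₃ ∧
        A₃₁ = B₃₁ ∧ A₃₂ = B₃₂ ∧ A₃₃ = B₃₃ := by
  rw [b3, b3, fromBlocks_inj, fromCols_ext_iff, fromRows_ext_iff, fromBlocks_inj]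
  tauto

end BlockMatrix

section Realization

variable {α n m p : Type*} [Ring α] [Fintype n] [Fintype m] [Fintype p]
  [DecidableEq n] [DecidableEq m] [DecidableEq p]
  {M : Matrix n n α} {B : Matrix n m α} {C : Matrix p n α} {D : Matrix p m α} {K : Matrix m p α}
  {Φxx : Matrix n n α} {Sxu : Matrix n m α} {Φxy : Matrix n p α}
  {Φux : Matrix m n α} {Suu : Matrix m m α} {Φuy : Matrix m p α}
  {Syx : Matrix p n α} {Syu : Matrix p m α} {Syy : Matrix p p α}

theorem output_feedback_relations_of_one_sub_mul_eq_one
    (h : (1 - b3 M B 0 0 0 K C D 0) * b3 Φxx Sxu Φxy Φux Suu Φuy Syx Syu Syy = 1) :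
    Φux = K * Syx ∧ Φuy = K * Syy ∧ Syx = C * Φxx + D * Φux ∧ Syy = 1 + C * Φxy + D * Φuy := by
  rw [← b3_one_s9, b3_sub, b3_mul, b3_inj_s9] at h
  obtain ⟨-, -, -, hux, -, huy, hyx, -, hyy⟩ := h
  simp only [sub_zero, zero_sub, Matrix.zero_mul, Matrix.one_mul, Matrix.neg_mul, zero_add]
    at hux huy hyx hyy
  refine ⟨add_neg_eq_zero.mp hux, add_neg_eq_zero.mp huy, ?_, ?_⟩
  · rw [← sub_eq_zero, ← hyx]
    abel
  · rw [← hyy]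
    abel

end Realization

section SchurComplement

variable {α n m p : Type*} [Ring α] [Fintype n] [Fintype m] [DecidableEq n] [DecidableEq p]
  {C : Matrix p n α} {D : Matrix p m α} {Φxx Y : Matrix n n α} {Φxy : Matrix n p α}
  {Φux : Matrix m n α} {Φuy : Matrix m p α} {Syx : Matrix p n α} {Syy : Matrix p p α}

theorem schur_complement_eq_one_add_mul (hY : Φxx * Y = 1) (hyx : Syx = C * Φxx + D * Φux)
    (hyy : Syy = 1 + C * Φxy + D * Φuy) :
    Syy - Syx * Y * Φxy = 1 + D * (Φuy - Φux * Y * Φxy) := by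
  rw [hyx, hyy, Matrix.add_mul, Matrix.add_mul, Matrix.mul_assoc C, hY, Matrix.mul_one,
    Matrix.mul_sub, Matrix.mul_assoc D, Matrix.mul_assoc D]
  abel

end SchurComplement

theorem isUnit_of_eq_one_add_mul_mul {α m p : Type*} [CommRing α] [Fintype m] [Fintype p]
    [DecidableEq p] {P : Matrix p p α} {D : Matrix p m α} {K : Matrix m p α}
    (h : P = 1 + D * (K * P)) : IsUnit P :=
  IsUnit.of_mul_eq_one_right (1 - D * K) <| by
    rw [Matrix.sub_mul, Matrix.one_mul, Matrix.mul_assoc, sub_eq_iff_eq_add', add_comm]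
    exact h

theorem of_sls_controller_formula_general {n m p : Type*} [Fintype n] [Fintype m] [Fintype p]
    [DecidableEq n] [DecidableEq m] [DecidableEq p]
    (A : Matrix n n ℝ) (B : Matrix n m ℝ) (C : Matrix p n ℝ) (D : Matrix p m ℝ)
    (K : Matrix m p (RatFunc ℝ))
    (Φxx : Matrix n n (RatFunc ℝ)) (Sxu : Matrix n m (RatFunc ℝ)) (Φxy : Matrix n p (RatFunc ℝ))
    (Φux : Matrix m n (RatFunc ℝ)) (Suu : Matrix m m (RatFunc ℝ)) (Φuy : Matrix m p (RatFunc ℝ))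
    (Syx : Matrix p n (RatFunc ℝ)) (Syu : Matrix p m (RatFunc ℝ)) (Syy : Matrix p p (RatFunc ℝ))
    (hL : (1 - b3 (mR A + (1 - zz) • (1 : Matrix n n (RatFunc ℝ))) (mR B)
            (0 : Matrix n p (RatFunc ℝ))
            (0 : Matrix m n (RatFunc ℝ)) (0 : Matrix m m (RatFunc ℝ)) K
            (mR C) (mR D) (0 : Matrix p p (RatFunc ℝ))) *
          b3 Φxx Sxu Φxy Φux Suu Φuy Syx Syu Syy = 1)
    (hΦxx : IsUnit Φxx) :
    let K₀ := Φuy - Φux * Φxx⁻¹ * Φxy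
    IsUnit (Syy - Syx * Φxx⁻¹ * Φxy) ∧
    IsUnit ((1 : Matrix p p (RatFunc ℝ)) + mR D * K₀) ∧
    K = K₀ * ((1 : Matrix p p (RatFunc ℝ)) + mR D * K₀)⁻¹ := by
  intro K₀
  obtain ⟨hux, huy, hyx, hyy⟩ := output_feedback_relations_of_one_sub_mul_eq_one hL
  have hP : Syy - Syx * Φxx⁻¹ * Φxy = 1 + mR D * K₀ :=
    schur_complement_eq_one_add_mul
      (mul_nonsing_inv Φxx ((isUnit_iff_isUnit_det Φxx).mp hΦxx)) hyx hyy
  have hK₀ : K₀ = K * (Syy - Syx * Φxx⁻¹ * Φxy) := by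
    simp only [K₀, hux, huy, Matrix.mul_sub, Matrix.mul_assoc]
  have hPunit : IsUnit (Syy - Syx * Φxx⁻¹ * Φxy) :=
    isUnit_of_eq_one_add_mul_mul (hK₀ ▸ hP)
  refine ⟨hPunit, hP ▸ hPunit, ?_⟩
  rw [← hP, hK₀, mul_nonsing_inv_cancel_right _ _ ((isUnit_iff_isUnit_det _).mp hPunit)]

/-- **Output-feedback SLS controller formula for general direct feedthrough `D`**
(Corollary 5).  If `S` is a stability matrix for the output-feedback realization with
controller `K` and `Φxx` is invertible, then `Syy - Syx Φxx⁻¹ Φxy` is invertible, and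
with `K₀ := Φuy - Φux Φxx⁻¹ Φxy`, the matrix `1 + D K₀` is invertible and
`K = K₀ (1 + D K₀)⁻¹`. -/
theorem of_sls_controller_formula {n m p : Type*} [Fintype n] [Fintype m] [Fintype p]
    [DecidableEq n] [DecidableEq m] [DecidableEq p]
    (A : Matrix n n ℝ) (B : Matrix n m ℝ) (C : Matrix p n ℝ) (D : Matrix p m ℝ)
    (K : Matrix m p (RatFunc ℝ))
    (Φxx : Matrix n n (RatFunc ℝ)) (Sxu : Matrix n m (RatFunc ℝ)) (Φxy : Matrix n p (RatFunc ℝ))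
    (Φux : Matrix m n (RatFunc ℝ)) (Suu : Matrix m m (RatFunc ℝ)) (Φuy : Matrix m p (RatFunc ℝ))
    (Syx : Matrix p n (RatFunc ℝ)) (Syu : Matrix p m (RatFunc ℝ)) (Syy : Matrix p p (RatFunc ℝ))
    (hL : (1 - b3 (mR A + (1 - zz) • (1 : Matrix n n (RatFunc ℝ))) (mR B)
            (0 : Matrix n p (RatFunc ℝ))
            (0 : Matrix m n (RatFunc ℝ)) (0 : Matrix m m (RatFunc ℝ)) K
            (mR C) (mR D) (0 : Matrix p p (RatFunc ℝ))) *
          b3 Φxx Sxu Φxy Φux Suu Φuy Syx Syu Syy = 1)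
    (hR : b3 Φxx Sxu Φxy Φux Suu Φuy Syx Syu Syy *
          (1 - b3 (mR A + (1 - zz) • (1 : Matrix n n (RatFunc ℝ))) (mR B)
            (0 : Matrix n p (RatFunc ℝ))
            (0 : Matrix m n (RatFunc ℝ)) (0 : Matrix m m (RatFunc ℝ)) K
            (mR C) (mR D) (0 : Matrix p p (RatFunc ℝ))) = 1)
    (hΦxx : IsUnit Φxx) :
    let K₀ := Φuy - Φux * Φxx⁻¹ * Φxy
    IsUnit (Syy - Syx * Φxx⁻¹ * Φxy) ∧
    IsUnit ((1 : Matrix p p (RatFunc ℝ)) + mR D * K₀) ∧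
    K = K₀ * ((1 : Matrix p p (RatFunc ℝ)) + mR D * K₀)⁻¹ :=
  of_sls_controller_formula_general A B C D K Φxx Sxu Φxy Φux Suu Φuy Syx Syu Syy hL hΦxx
end
end

section
/- Equivalence of state-feedback SLP and IOP parameters (Section IV-F): Let K := RatFunc ℝ with z := RatFunc.X, let A : n×n and B : n×m be real matrices over K, and let K, Φx, Sxu, Φu, Suu be matrices over K with (Matrix.fromBlocks (z•1 − A) (−B) (−K) 1) * (Matrix.fromBlocks Φx Sxu Φu Suu) = 1. If z•1 − A is invertible and G := (z•1 − A)⁻¹ * B, then (Matrix.fromBlocks 1 (−G) (−K) 1) * (Matrix.fromBlocks (Φx * (z•1 − A)) Sxu (Φu * (z•1 − A)) Suu) = 1; that is, the same controller K has IOP parameters (Y, W, U, Z) = (Φx(z•1 − A), Sxu, Φu(z•1 − A), Suu). -/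
open Matrix

noncomputable section

set_option synthInstance.maxHeartbeats 1000000
set_option maxHeartbeats 1000000

namespace Matrix

variable {l n o α : Type*} [Semiring α] [Fintype l] [Fintype o] [DecidableEq o]

theorem fromBlocks_diag_one_mul_fromBlocks (D : Matrix l l α) (P : Matrix l n α)
    (Q : Matrix l o α) (R : Matrix o n α) (S : Matrix o o α) :
    fromBlocks D 0 0 (1 : Matrix o o α) * fromBlocks P Q R S =
      fromBlocks (D * P) (D * Q) R S := by
  simp [fromBlocks_multiply]

theorem fromBlocks_mul_fromBlocks_diag_one (P : Matrix n l α) (Q : Matrix n o α)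
    (R : Matrix o l α) (S : Matrix o o α) (D : Matrix l l α) :
    fromBlocks P Q R S * fromBlocks D 0 0 (1 : Matrix o o α) =
      fromBlocks (P * D) Q (R * D) S := by
  simp [fromBlocks_multiply]

end Matrix

theorem mul_mul_mul_eq_one_of_mul_eq_one {M : Type*} [Monoid M] {a b t t' : M}
    (hab : a * b = 1) (ht : t' * t = 1) : t' * a * (b * t) = 1 := by
  rw [mul_assoc, ← mul_assoc a, hab, one_mul, ht]

/-- **Equivalence of state-feedback SLP and IOP parameters** (Section IV-F).
If `[[z•1 - A, -B],[-K, 1]] * [[Φx, Sxu],[Φu, Suu]] = 1` and `z•1 - A` is invertible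
with `G := (z•1 - A)⁻¹ * B`, then the same controller `K` has IOP parameters
`(Y, W, U, Z) = (Φx (z•1 - A), Sxu, Φu (z•1 - A), Suu)`. -/
theorem slp_iop_equivalence {n m : Type*} [Fintype n] [Fintype m]
    [DecidableEq n] [DecidableEq m]
    (A : Matrix n n ℝ) (B : Matrix n m ℝ) (K : Matrix m n (RatFunc ℝ))
    (Φx : Matrix n n (RatFunc ℝ)) (Sxu : Matrix n m (RatFunc ℝ))
    (Φu : Matrix m n (RatFunc ℝ)) (Suu : Matrix m m (RatFunc ℝ))
    (h : Matrix.fromBlocks (zz • (1 : Matrix n n (RatFunc ℝ)) - mR A) (-(mR B)) (-K) 1 *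
        Matrix.fromBlocks Φx Sxu Φu Suu = 1)
    (hA : IsUnit (zz • (1 : Matrix n n (RatFunc ℝ)) - mR A)) :
    let G := (zz • (1 : Matrix n n (RatFunc ℝ)) - mR A)⁻¹ * mR B
    Matrix.fromBlocks 1 (-G) (-K) 1 *
      Matrix.fromBlocks (Φx * (zz • (1 : Matrix n n (RatFunc ℝ)) - mR A)) Sxu
        (Φu * (zz • (1 : Matrix n n (RatFunc ℝ)) - mR A)) Suu = 1 := by
  intro G
  set D := zz • (1 : Matrix n n (RatFunc ℝ)) - mR A
  have hD : D⁻¹ * D = 1 := nonsing_inv_mul D ((isUnit_iff_isUnit_det D).mp hA)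
  have hT : fromBlocks D⁻¹ 0 0 1 * fromBlocks D 0 0 (1 : Matrix m m (RatFunc ℝ)) = 1 := by
    rw [fromBlocks_diag_one_mul_fromBlocks, hD, Matrix.mul_zero, fromBlocks_one]
  have hM : fromBlocks D⁻¹ 0 0 1 * fromBlocks D (-mR B) (-K) 1 = fromBlocks 1 (-G) (-K) 1 := by
    rw [fromBlocks_diag_one_mul_fromBlocks, hD, Matrix.mul_neg]
  -- conjugating the SLP identity by `T = diag(D, 1)` yields the IOP identity
  rw [← hM, ← fromBlocks_mul_fromBlocks_diag_one]
  exact mul_mul_mul_eq_one_of_mul_eq_one h hT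

end
end

section
/- Structure of the generalized SLS stability matrix (proof of the generalized system level synthesis corollary): Over a commutative ring K, let R be the 4×4 block matrix [[0, −G, 0, −Pyw],[−K, 0, 0, 0],[0, −Pzu, 0, −Pzw],[0, 0, 0, 0]] (blocks indexed by measurement y, control u, output z, disturbance w), and suppose S, with blocks S_{ab} for a, b ∈ {y, u, z, w}, satisfies (1 − R)S = 1 and S(1 − R) = 1. Then the z-block column of S is the identity column (S_{yz} = 0, S_{uz} = 0, S_{zz} = 1, S_{wz} = 0), the w-block row of S is the identity row (S_{wy} = 0, S_{wu} = 0, S_{wz} = 0, S_{ww} = 1), and moreover K * S_{yy} + S_{uy} = 0 and S_{yy} + G * S_{uy} = 1. -/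
open Matrix

/-- **Structure of the generalized SLS stability matrix** (proof of the generalized
system level synthesis corollary).  For the 4×4 block realization
`R = [[0, -G, 0, -Pyw],[-K, 0, 0, 0],[0, -Pzu, 0, -Pzw],[0, 0, 0, 0]]`
(blocks indexed by `y, u, z, w`), if `S` is a two-sided inverse of `1 - R`, then the
`z`-block column of `S` is the identity column, the `w`-block row of `S` is the
identity row, and `K * Syy + Suy = 0`, `Syy + G * Suy = 1`. -/
theorem generalized_sls_structure {y u q w K : Type*}
    [Fintype y] [Fintype u] [Fintype q] [Fintype w]
    [DecidableEq y] [DecidableEq u] [DecidableEq q] [DecidableEq w] [CommRing K]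
    (G : Matrix y u K) (Kc : Matrix u y K) (Pyw : Matrix y w K)
    (Pzu : Matrix q u K) (Pzw : Matrix q w K)
    (Syy : Matrix y y K) (Syu : Matrix y u K) (Syz : Matrix y q K) (Syw : Matrix y w K)
    (Suy : Matrix u y K) (Suu : Matrix u u K) (Suz : Matrix u q K) (Suw : Matrix u w K)
    (Szy : Matrix q y K) (Szu : Matrix q u K) (Szz : Matrix q q K) (Szw : Matrix q w K)
    (Swy : Matrix w y K) (Swu : Matrix w u K) (Swz : Matrix w q K) (Sww : Matrix w w K)
    (hL : (1 - Matrix.fromBlocks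
            (Matrix.fromBlocks (0 : Matrix y y K) (-G) (-Kc) (0 : Matrix u u K))
            (Matrix.fromBlocks (0 : Matrix y q K) (-Pyw) (0 : Matrix u q K) (0 : Matrix u w K))
            (Matrix.fromBlocks (0 : Matrix q y K) (-Pzu) (0 : Matrix w y K) (0 : Matrix w u K))
            (Matrix.fromBlocks (0 : Matrix q q K) (-Pzw) (0 : Matrix w q K) (0 : Matrix w w K))) *
          Matrix.fromBlocks
            (Matrix.fromBlocks Syy Syu Suy Suu)
            (Matrix.fromBlocks Syz Syw Suz Suw)
            (Matrix.fromBlocks Szy Szu Swy Swu)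
            (Matrix.fromBlocks Szz Szw Swz Sww) = 1)
    (hR : Matrix.fromBlocks
            (Matrix.fromBlocks Syy Syu Suy Suu)
            (Matrix.fromBlocks Syz Syw Suz Suw)
            (Matrix.fromBlocks Szy Szu Swy Swu)
            (Matrix.fromBlocks Szz Szw Swz Sww) *
          (1 - Matrix.fromBlocks
            (Matrix.fromBlocks (0 : Matrix y y K) (-G) (-Kc) (0 : Matrix u u K))
            (Matrix.fromBlocks (0 : Matrix y q K) (-Pyw) (0 : Matrix u q K) (0 : Matrix u w K))
            (Matrix.fromBlocks (0 : Matrix q y K) (-Pzu) (0 : Matrix w y K) (0 : Matrix w u K))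
            (Matrix.fromBlocks (0 : Matrix q q K) (-Pzw) (0 : Matrix w q K) (0 : Matrix w w K))) = 1) :
    Syz = 0 ∧ Suz = 0 ∧ Szz = 1 ∧ Swz = 0 ∧
    Swy = 0 ∧ Swu = 0 ∧ Sww = 1 ∧
    Kc * Syy + Suy = 0 ∧ Syy + G * Suy = 1 := by
  rw [sub_mul, one_mul, sub_eq_iff_eq_add] at hL
  rw [mul_sub, mul_one, sub_eq_iff_eq_add] at hR
  simp only [← Matrix.fromBlocks_one, Matrix.fromBlocks_multiply, Matrix.fromBlocks_add,
    Matrix.fromBlocks_inj, Matrix.neg_mul, Matrix.zero_mul, Matrix.mul_zero, Matrix.mul_neg,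
    zero_add, add_zero, neg_zero] at hL hR
  obtain ⟨⟨h1, h2, h3, h4⟩, ⟨h5, h6, h7, h8⟩, ⟨h9, h10, h11, h12⟩, h13, h14, h15, h16⟩ := hL
  obtain ⟨⟨g1, g2, g3, g4⟩, ⟨g5, g6, g7, g8⟩, ⟨g9, g10, g11, g12⟩, g13, g14, g15, g16⟩ := hR
  refine ⟨g5, g7, g13, g15, h11, h12, h16, ?_, ?_⟩
  · rw [h3, add_neg_cancel]
  · rw [h1, h11, Matrix.mul_zero, neg_zero, add_zero, add_assoc, neg_add_cancel, add_zero]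
end

section
/- Necessity in the closed-loop design separation (Corollary 14, forward direction): Let K := RatFunc ℝ with z := RatFunc.X, let A : n×n and B : n×m be real matrices over K, and let P_c : n×n, M_c : m×n be matrices over K. Define the 3×3 block realization R := [[A + (1−z)•1, B, 0],[0, 0, z•M_c],[1, 0, 1 − z•P_c]] (blocks indexed by x, u, δ with δ of dimension n). If a matrix S, whose first block column has blocks Φx (the (x,x) block), Φu (the (u,x) block), and S₃₁ (the (δ,x) block), satisfies S * (1 − R) = 1, then with Δc := (z•1 − A) * P_c − B * M_c one has Φx * Δc = P_c, Φu * Δc = M_c, and S₃₁ * Δc = z⁻¹•1. -/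
/-!
The block column `X = (P_c, M_c, z⁻¹ • 1)` is sent by `1 - R` to `(Δc, 0, 0)`: the `z` in the
controller blocks `z M_c` and `1 - z P_c` cancels against `z⁻¹`, and the first block row is
`Δc` by construction. Since `S` is a left inverse of `1 - R`, `X = S (1 - R) X = S (Δc, 0, 0)`,
whose blocks are `Φx Δc`, `Φu Δc` and `S₃₁ Δc`.
-/

open Matrix

noncomputable section

set_option synthInstance.maxHeartbeats 1000000
set_option maxHeartbeats 1000000

lemma Matrix.fromRows_sub {α m₁ m₂ n : Type*} [Sub α] (X₁ Y₁ : Matrix m₁ n α)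
    (X₂ Y₂ : Matrix m₂ n α) :
    fromRows X₁ X₂ - fromRows Y₁ Y₂ = fromRows (X₁ - Y₁) (X₂ - Y₂) := by
  ext (_ | _) _ <;> rfl

lemma Matrix.fromRows_add_s15 {α m₁ m₂ n : Type*} [Add α] (X₁ Y₁ : Matrix m₁ n α)
    (X₂ Y₂ : Matrix m₂ n α) :
    fromRows X₁ X₂ + fromRows Y₁ Y₂ = fromRows (X₁ + Y₁) (X₂ + Y₂) := by
  ext (_ | _) _ <;> rfl

lemma b3_mul_fromRows {α n₁ n₂ n₃ m₁ m₂ m₃ p : Type*} [Semiring α]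
    [Fintype m₁] [Fintype m₂] [Fintype m₃]
    (M₁₁ : Matrix n₁ m₁ α) (M₁₂ : Matrix n₁ m₂ α) (M₁₃ : Matrix n₁ m₃ α)
    (M₂₁ : Matrix n₂ m₁ α) (M₂₂ : Matrix n₂ m₂ α) (M₂₃ : Matrix n₂ m₃ α)
    (M₃₁ : Matrix n₃ m₁ α) (M₃₂ : Matrix n₃ m₂ α) (M₃₃ : Matrix n₃ m₃ α)
    (X₁ : Matrix m₁ p α) (X₂ : Matrix m₂ p α) (X₃ : Matrix m₃ p α) :
    b3 M₁₁ M₁₂ M₁₃ M₂₁ M₂₂ M₂₃ M₃₁ M₃₂ M₃₃ * fromRows X₁ (fromRows X₂ X₃) =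
      fromRows (M₁₁ * X₁ + M₁₂ * X₂ + M₁₃ * X₃)
        (fromRows (M₂₁ * X₁ + M₂₂ * X₂ + M₂₃ * X₃) (M₃₁ * X₁ + M₃₂ * X₂ + M₃₃ * X₃)) := by
  rw [b3, fromBlocks_mul_fromRows, fromCols_mul_fromRows, fromRows_mul, fromBlocks_mul_fromRows,
    Matrix.fromRows_add_s15]
  simp only [add_assoc]

lemma one_sub_realization_mul {K n m : Type*} [Field K] [Fintype n] [Fintype m]
    [DecidableEq n] [DecidableEq m] {z : K} (hz : z ≠ 0)
    (A : Matrix n n K) (B : Matrix n m K) (Pc : Matrix n n K) (Mc : Matrix m n K) :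
    (1 - b3 (A + (1 - z) • (1 : Matrix n n K)) B 0 0 0 (z • Mc) (1 : Matrix n n K) 0
        (1 - z • Pc)) * fromRows Pc (fromRows Mc (z⁻¹ • (1 : Matrix n n K))) =
      fromRows ((z • 1 - A) * Pc - B * Mc) (fromRows 0 0) := by
  rw [Matrix.sub_mul, Matrix.one_mul, b3_mul_fromRows, Matrix.fromRows_sub, Matrix.fromRows_sub]
  refine congrArg₂ fromRows ?_ (congrArg₂ fromRows ?_ ?_)
  · simp only [Matrix.add_mul, Matrix.sub_mul, Matrix.smul_mul, Matrix.one_mul, Matrix.zero_mul]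
    module
  · simp only [Matrix.zero_mul, Matrix.mul_smul, Matrix.mul_one, smul_smul, inv_mul_cancel₀ hz,
      one_smul, zero_add, sub_self]
  · simp only [Matrix.mul_smul, Matrix.one_mul, Matrix.mul_one, Matrix.zero_mul,
      smul_sub, smul_smul, inv_mul_cancel₀ hz, one_smul]
    abel

/-- **Necessity in the closed-loop design separation** (Corollary 14, forward
direction).  For the realization `R` of Fig. 8 (built from `(P_c, M_c)`), if a matrix
`S` with first block column `(Φx, Φu, S₃₁)` satisfies `S (1 - R) = 1`, then with
`Δc := (z•1 - A) P_c - B M_c` one has `Φx Δc = P_c`, `Φu Δc = M_c`, and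
`S₃₁ Δc = z⁻¹ • 1`. -/
theorem closed_loop_separation_necessity {n m : Type*} [Fintype n] [Fintype m]
    [DecidableEq n] [DecidableEq m]
    (A : Matrix n n ℝ) (B : Matrix n m ℝ)
    (Pc : Matrix n n (RatFunc ℝ)) (Mc : Matrix m n (RatFunc ℝ))
    (Φx : Matrix n n (RatFunc ℝ)) (S₁₂ : Matrix n m (RatFunc ℝ)) (S₁₃ : Matrix n n (RatFunc ℝ))
    (Φu : Matrix m n (RatFunc ℝ)) (S₂₂ : Matrix m m (RatFunc ℝ)) (S₂₃ : Matrix m n (RatFunc ℝ))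
    (S₃₁ : Matrix n n (RatFunc ℝ)) (S₃₂ : Matrix n m (RatFunc ℝ)) (S₃₃ : Matrix n n (RatFunc ℝ))
    (h : b3 Φx S₁₂ S₁₃ Φu S₂₂ S₂₃ S₃₁ S₃₂ S₃₃ *
        (1 - b3 (mR A + (1 - zz) • (1 : Matrix n n (RatFunc ℝ))) (mR B)
          (0 : Matrix n n (RatFunc ℝ))
          (0 : Matrix m n (RatFunc ℝ)) (0 : Matrix m m (RatFunc ℝ)) (zz • Mc)
          (1 : Matrix n n (RatFunc ℝ)) (0 : Matrix n m (RatFunc ℝ))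
          ((1 : Matrix n n (RatFunc ℝ)) - zz • Pc)) = 1) :
    let Δc := (zz • (1 : Matrix n n (RatFunc ℝ)) - mR A) * Pc - mR B * Mc
    Φx * Δc = Pc ∧ Φu * Δc = Mc ∧ S₃₁ * Δc = zz⁻¹ • (1 : Matrix n n (RatFunc ℝ)) := by
  intro Δc
  have hcol : fromRows Pc (fromRows Mc (zz⁻¹ • (1 : Matrix n n (RatFunc ℝ)))) =
      b3 Φx S₁₂ S₁₃ Φu S₂₂ S₂₃ S₃₁ S₃₂ S₃₃ *
        fromRows Δc (fromRows (0 : Matrix m n (RatFunc ℝ)) (0 : Matrix n n (RatFunc ℝ))) := by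
    rw [← Matrix.one_mul (fromRows Pc _), ← h, Matrix.mul_assoc,
      one_sub_realization_mul RatFunc.X_ne_zero]
  simp only [b3_mul_fromRows, Matrix.mul_zero, add_zero, fromRows_ext_iff] at hcol
  exact ⟨hcol.1.symm, hcol.2.1.symm, hcol.2.2.symm⟩

end
end

section
/- Robust state-feedback SLS (Corollary 11, algebraic core): Let K := RatFunc ℝ with z := RatFunc.X, let A : n×n, B : n×m be real matrices over K, and let Φ̂x : n×n, Φ̂u : m×n, Δ : n×n be matrices over K satisfying the perturbed SLP constraint (z•1 − A) * Φ̂x − B * Φ̂u = 1 + Δ. If 1 + Δ and Φ̂x are invertible, then with K := Φ̂u * Φ̂x⁻¹ the corrected responses Φx := Φ̂x * (1 + Δ)⁻¹ and Φu := Φ̂u * (1 + Δ)⁻¹ satisfy the exact SLP constraint (z•1 − A) * Φx − B * Φu = 1 and are achieved by the controller K: K * Φx = Φu. Consequently Matrix.fromBlocks (z•1 − A) (−B) (−K) 1 is invertible with inverse having first block column (Φ̂x(1+Δ)⁻¹, Φ̂u(1+Δ)⁻¹). -/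
open Matrix

noncomputable section

set_option synthInstance.maxHeartbeats 1000000
set_option maxHeartbeats 1000000

/-- **Robust state-feedback SLS** (Corollary 11, algebraic core).  If `(Φ̂x, Φ̂u)`
satisfy the perturbed SLP constraint `(z•1 - A) Φ̂x - B Φ̂u = 1 + Δ` with `1 + Δ` and
`Φ̂x` invertible, then with `K := Φ̂u Φ̂x⁻¹` the corrected responses
`Φx := Φ̂x (1 + Δ)⁻¹`, `Φu := Φ̂u (1 + Δ)⁻¹` satisfy the exact SLP constraint, are
achieved by `K`, and `[[z•1 - A, -B],[-K, 1]]` is invertible with inverse having first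
block column `(Φx, Φu)`. -/
theorem robust_sf_sls {n m : Type*} [Fintype n] [Fintype m]
    [DecidableEq n] [DecidableEq m]
    (A : Matrix n n ℝ) (B : Matrix n m ℝ)
    (Φhx : Matrix n n (RatFunc ℝ)) (Φhu : Matrix m n (RatFunc ℝ))
    (Δ : Matrix n n (RatFunc ℝ))
    (hSLP : (zz • (1 : Matrix n n (RatFunc ℝ)) - mR A) * Φhx - mR B * Φhu = 1 + Δ)
    (hΔ : IsUnit ((1 : Matrix n n (RatFunc ℝ)) + Δ)) (hΦ : IsUnit Φhx) :
    let Kc := Φhu * Φhx⁻¹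
    let Φx := Φhx * ((1 : Matrix n n (RatFunc ℝ)) + Δ)⁻¹
    let Φu := Φhu * ((1 : Matrix n n (RatFunc ℝ)) + Δ)⁻¹
    (zz • (1 : Matrix n n (RatFunc ℝ)) - mR A) * Φx - mR B * Φu = 1 ∧
    Kc * Φx = Φu ∧
    ∃ Sxu : Matrix n m (RatFunc ℝ), ∃ Suu : Matrix m m (RatFunc ℝ),
      Matrix.fromBlocks (zz • (1 : Matrix n n (RatFunc ℝ)) - mR A) (-(mR B)) (-Kc) 1 *
        Matrix.fromBlocks Φx Sxu Φu Suu = 1 ∧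
      Matrix.fromBlocks Φx Sxu Φu Suu *
        Matrix.fromBlocks (zz • (1 : Matrix n n (RatFunc ℝ)) - mR A) (-(mR B)) (-Kc) 1
        = 1 := by
  intro Kc Φx Φu
  set P := zz • (1 : Matrix n n (RatFunc ℝ)) - mR A with hP
  have hΔinv : ((1 : Matrix n n (RatFunc ℝ)) + Δ) * ((1 : Matrix n n (RatFunc ℝ)) + Δ)⁻¹ = 1 :=
    Matrix.mul_nonsing_inv _ ((Matrix.isUnit_iff_isUnit_det _).mp hΔ)
  have hΦinv : Φhx⁻¹ * Φhx = 1 :=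
    Matrix.nonsing_inv_mul _ ((Matrix.isUnit_iff_isUnit_det _).mp hΦ)
  have h1 : P * Φx - mR B * Φu = 1 := by
    show P * (Φhx * _) - mR B * (Φhu * _) = 1
    rw [← Matrix.mul_assoc, ← Matrix.mul_assoc, ← Matrix.sub_mul, hSLP, hΔinv]
  have h2 : Kc * Φx = Φu := by
    show Φhu * Φhx⁻¹ * (Φhx * _) = Φhu * _
    rw [Matrix.mul_assoc, ← Matrix.mul_assoc Φhx⁻¹, hΦinv, Matrix.one_mul]
  have h1' : P * Φx = 1 + mR B * Φu := sub_eq_iff_eq_add.mp h1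
  refine ⟨h1, h2, Φx * mR B, 1 + Φu * mR B, ?_, ?_⟩ <;>
  · have key : Matrix.fromBlocks P (-(mR B)) (-Kc) 1 *
        Matrix.fromBlocks Φx (Φx * mR B) Φu (1 + Φu * mR B) = 1 := by
      rw [Matrix.fromBlocks_multiply, ← Matrix.fromBlocks_one]
      simp only [Matrix.neg_mul, Matrix.one_mul, Matrix.add_mul, Matrix.mul_add,
        Matrix.mul_one, ← Matrix.mul_assoc, h1', h2, Matrix.add_mul]
      abel_nf
    first
      | exact key
      | exact mul_eq_one_comm.mp key

end
end

section
/- Robust input-output parameterization (Corollaries 10 and 12, algebraic core): Over a commutative ring K, let R̂ := Matrix.fromBlocks 0 G K 0 and Ŝ := Matrix.fromBlocks Y W U Z satisfy (1 − R̂) * Ŝ = Ŝ * (1 − R̂) = 1, and let the plant perturbation be Δ := Matrix.fromBlocks 0 ΔG 0 0 (so the perturbed plant is G + ΔG). Then 1 − Δ * Ŝ = Matrix.fromBlocks (1 − ΔG * U) (−(ΔG * Z)) 0 1, and if 1 − ΔG * U is invertible then 1 − Δ * Ŝ is invertible with inverse Matrix.fromBlocks ((1 − ΔG*U)⁻¹)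 ((1 − ΔG*U)⁻¹ * ΔG * Z) 0 1, and the perturbed stability matrix S(Δ) := Ŝ * (1 − Δ*Ŝ)⁻¹ is a two-sided inverse of 1 − R̂ − Δ. -/
open Matrix

/-- **Robust input-output parameterization** (Corollaries 10 and 12, algebraic core).
Let `R̂ = [[0, G],[K, 0]]` with two-sided inverse `Sh = [[Y, W],[U, Z]]` of `1 - R̂`,
and let the plant perturbation be `Δ = [[0, ΔG],[0, 0]]`.  Then
`1 - Δ Sh = [[1 - ΔG U, -(ΔG Z)],[0, 1]]`, and if `1 - ΔG U` is invertible then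
`1 - Δ Sh` is invertible with the stated inverse, and the perturbed stability matrix
`S(Δ) := Sh (1 - Δ Sh)⁻¹` is a two-sided inverse of `1 - R̂ - Δ`. -/
theorem robust_iop {p m K : Type*} [Fintype p] [Fintype m]
    [DecidableEq p] [DecidableEq m] [CommRing K]
    (G ΔG : Matrix p m K) (Kc : Matrix m p K)
    (Y : Matrix p p K) (W : Matrix p m K) (U : Matrix m p K) (Z : Matrix m m K)
    (hL : (1 - Matrix.fromBlocks (0 : Matrix p p K) G Kc (0 : Matrix m m K)) *
        Matrix.fromBlocks Y W U Z = 1)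
    (hR : Matrix.fromBlocks Y W U Z *
        (1 - Matrix.fromBlocks (0 : Matrix p p K) G Kc (0 : Matrix m m K)) = 1) :
    let Δ := Matrix.fromBlocks (0 : Matrix p p K) ΔG (0 : Matrix m p K) (0 : Matrix m m K)
    let Sh := Matrix.fromBlocks Y W U Z
    1 - Δ * Sh = Matrix.fromBlocks (1 - ΔG * U) (-(ΔG * Z)) 0 1 ∧
    (IsUnit ((1 : Matrix p p K) - ΔG * U) →
      IsUnit (1 - Δ * Sh) ∧
      (1 - Δ * Sh)⁻¹ =
        Matrix.fromBlocks ((1 - ΔG * U)⁻¹) ((1 - ΔG * U)⁻¹ * ΔG * Z) 0 1 ∧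
      (1 - Matrix.fromBlocks (0 : Matrix p p K) G Kc (0 : Matrix m m K) - Δ) *
        (Sh * (1 - Δ * Sh)⁻¹) = 1 ∧
      (Sh * (1 - Δ * Sh)⁻¹) *
        (1 - Matrix.fromBlocks (0 : Matrix p p K) G Kc (0 : Matrix m m K) - Δ) = 1) := by
  intro Δ Sh
  set A := (1 : Matrix (p ⊕ m) (p ⊕ m) K) -
    Matrix.fromBlocks (0 : Matrix p p K) G Kc (0 : Matrix m m K) with hA
  have hblock : (1 : Matrix (p ⊕ m) (p ⊕ m) K) - Δ * Sh =
      Matrix.fromBlocks (1 - ΔG * U) (-(ΔG * Z)) 0 1 := by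
    show (1 : Matrix (p ⊕ m) (p ⊕ m) K) -
        Matrix.fromBlocks (0 : Matrix p p K) ΔG 0 0 * Matrix.fromBlocks Y W U Z = _
    rw [Matrix.fromBlocks_multiply, sub_eq_add_neg, ← Matrix.fromBlocks_one,
      Matrix.fromBlocks_neg, Matrix.fromBlocks_add, Matrix.fromBlocks_inj]
    refine ⟨by simp [sub_eq_add_neg], by simp, by simp, by simp⟩
  refine ⟨hblock, fun hE => ?_⟩
  set E := (1 : Matrix p p K) - ΔG * U with hEdef
  have hEd : IsUnit E.det := (Matrix.isUnit_iff_isUnit_det E).mp hE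
  have hE1 : E * E⁻¹ = 1 := Matrix.mul_nonsing_inv E hEd
  have hE2 : E⁻¹ * E = 1 := Matrix.nonsing_inv_mul E hEd
  set N := Matrix.fromBlocks (E⁻¹) (E⁻¹ * ΔG * Z) (0 : Matrix m p K) (1 : Matrix m m K)
    with hN
  have hMN : ((1 : Matrix (p ⊕ m) (p ⊕ m) K) - Δ * Sh) * N = 1 := by
    have key : E * (E⁻¹ * ΔG * Z) = ΔG * Z := by
      rw [← Matrix.mul_assoc, ← Matrix.mul_assoc, hE1, Matrix.one_mul]
    rw [hblock, hN, Matrix.fromBlocks_multiply, ← Matrix.fromBlocks_one,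
      Matrix.fromBlocks_inj]
    refine ⟨by simp [hE1], by simp [key], by simp, by simp⟩
  have hNM : N * ((1 : Matrix (p ⊕ m) (p ⊕ m) K) - Δ * Sh) = 1 :=
    mul_eq_one_comm.mp hMN
  have hUnit : IsUnit ((1 : Matrix (p ⊕ m) (p ⊕ m) K) - Δ * Sh) :=
    ⟨⟨_, N, hMN, hNM⟩, rfl⟩
  have hinv : ((1 : Matrix (p ⊕ m) (p ⊕ m) K) - Δ * Sh)⁻¹ = N :=
    Matrix.inv_eq_right_inv hMN
  have hfact : (A - Δ) * Sh = 1 - Δ * Sh := by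
    rw [Matrix.sub_mul, hL]
  have hfact2 : (1 - Δ * Sh) * A = A - Δ := by
    rw [Matrix.sub_mul, Matrix.one_mul, Matrix.mul_assoc, hR, Matrix.mul_one]
  refine ⟨hUnit, by rw [hinv], ?_, ?_⟩
  · rw [← Matrix.mul_assoc, hfact, hinv, hMN]
  · calc Sh * ((1 - Δ * Sh)⁻¹) * (A - Δ)
        = Sh * ((1 - Δ * Sh)⁻¹) * ((1 - Δ * Sh) * A) := by rw [hfact2]
      _ = Sh * (((1 - Δ * Sh)⁻¹ * (1 - Δ * Sh)) * A) := by
          rw [Matrix.mul_assoc, Matrix.mul_assoc]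
      _ = 1 := by rw [hinv, hNM, Matrix.one_mul, hR]
end

section
/- Robust output-feedback SLS (Corollary 13, algebraic core): Let K := RatFunc ℝ with z := RatFunc.X, let A : n×n, B : n×m, C : p×n be real matrices over K, and let Φ̂xx : n×n, Φ̂xy : n×p, Φ̂ux : m×n, Φ̂uy : m×p, Δ₁ : n×n, Δ₂ : m×n be matrices over K satisfying: (z•1 − A)*Φ̂xx − B*Φ̂ux = 1, (z•1 − A)*Φ̂xy − B*Φ̂uy = 0, Φ̂xx*(z•1 − A) − Φ̂xy*C = 1 + Δ₁, and Φ̂ux*(z•1 − A) − Φ̂uy*C = Δ₂. Then (z•1 − A)*Δ₁ = B*Δ₂; and if 1 + Δ₁ is invertible, the corrected responses Φxx := (1+Δ₁)⁻¹*Φ̂xx, Φxy := (1+Δ₁)⁻¹*Φ̂xy, Φux := Φ̂ux − Δ₂*(1+Δ₁)⁻¹*Φ̂xx, Φuy := Φ̂uy − Δ₂*(1+Δ₁)⁻¹*Φ̂xy satisfy the exact output-feedback SLP constraints: (z•1 − A)*Φxx − B*Φux = 1, (z•1 − A)*Φxy − B*Φuy = 0, Φxx*(z•1 − A) − Φxy*C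 = 1, and Φux*(z•1 − A) − Φuy*C = 0. -/
open Matrix

noncomputable section

set_option synthInstance.maxHeartbeats 1000000
set_option maxHeartbeats 1000000

/-- **Robust output-feedback SLS** (Corollary 13, algebraic core).  If
`(Φ̂xx, Φ̂ux, Φ̂xy, Φ̂uy)` satisfy the first output-feedback SLP constraint exactly and
the second only up to residuals `(Δ₁, Δ₂)`, then `(z•1 - A) Δ₁ = B Δ₂`; and if
`1 + Δ₁` is invertible, the corrected responses
`Φxx := (1+Δ₁)⁻¹ Φ̂xx`, `Φxy := (1+Δ₁)⁻¹ Φ̂xy`,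
`Φux := Φ̂ux - Δ₂ (1+Δ₁)⁻¹ Φ̂xx`, `Φuy := Φ̂uy - Δ₂ (1+Δ₁)⁻¹ Φ̂xy`
satisfy the exact output-feedback SLP constraints. -/
theorem robust_of_sls {n m p : Type*} [Fintype n] [Fintype m] [Fintype p]
    [DecidableEq n] [DecidableEq m] [DecidableEq p]
    (A : Matrix n n ℝ) (B : Matrix n m ℝ) (C : Matrix p n ℝ)
    (Φhxx : Matrix n n (RatFunc ℝ)) (Φhxy : Matrix n p (RatFunc ℝ))
    (Φhux : Matrix m n (RatFunc ℝ)) (Φhuy : Matrix m p (RatFunc ℝ))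
    (Δ₁ : Matrix n n (RatFunc ℝ)) (Δ₂ : Matrix m n (RatFunc ℝ))
    (h₁ : (zz • (1 : Matrix n n (RatFunc ℝ)) - mR A) * Φhxx - mR B * Φhux = 1)
    (h₂ : (zz • (1 : Matrix n n (RatFunc ℝ)) - mR A) * Φhxy - mR B * Φhuy = 0)
    (h₃ : Φhxx * (zz • (1 : Matrix n n (RatFunc ℝ)) - mR A) - Φhxy * mR C = 1 + Δ₁)
    (h₄ : Φhux * (zz • (1 : Matrix n n (RatFunc ℝ)) - mR A) - Φhuy * mR C = Δ₂) :
    (zz • (1 : Matrix n n (RatFunc ℝ)) - mR A) * Δ₁ = mR B * Δ₂ ∧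
    (IsUnit ((1 : Matrix n n (RatFunc ℝ)) + Δ₁) →
      let Φxx := ((1 : Matrix n n (RatFunc ℝ)) + Δ₁)⁻¹ * Φhxx
      let Φxy := ((1 : Matrix n n (RatFunc ℝ)) + Δ₁)⁻¹ * Φhxy
      let Φux := Φhux - Δ₂ * ((1 : Matrix n n (RatFunc ℝ)) + Δ₁)⁻¹ * Φhxx
      let Φuy := Φhuy - Δ₂ * ((1 : Matrix n n (RatFunc ℝ)) + Δ₁)⁻¹ * Φhxy
      (zz • (1 : Matrix n n (RatFunc ℝ)) - mR A) * Φxx - mR B * Φux = 1 ∧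
      (zz • (1 : Matrix n n (RatFunc ℝ)) - mR A) * Φxy - mR B * Φuy = 0 ∧
      Φxx * (zz • (1 : Matrix n n (RatFunc ℝ)) - mR A) - Φxy * mR C = 1 ∧
      Φux * (zz • (1 : Matrix n n (RatFunc ℝ)) - mR A) - Φuy * mR C = 0) := by
  set Z : Matrix n n (RatFunc ℝ) := zz • (1 : Matrix n n (RatFunc ℝ)) - mR A with hZ
  have e1 : Z * Φhxx = 1 + mR B * Φhux := sub_eq_iff_eq_add.mp h₁
  have e2 : Z * Φhxy = mR B * Φhuy := sub_eq_zero.mp h₂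
  have hd1 : Z * Δ₁ = mR B * Δ₂ := by
    have h5 : Z * (Φhxx * Z - Φhxy * mR C) - Z = mR B * (Φhux * Z - Φhuy * mR C) := by
      rw [Matrix.mul_sub, ← Matrix.mul_assoc, ← Matrix.mul_assoc, e1, e2]
      simp only [Matrix.add_mul, Matrix.one_mul, Matrix.mul_assoc, Matrix.mul_sub]
      abel
    rw [h₃, h₄, Matrix.mul_add, Matrix.mul_one, add_sub_cancel_left] at h5
    exact h5
  refine ⟨hd1, ?_⟩
  intro hU
  set E : Matrix n n (RatFunc ℝ) := ((1 : Matrix n n (RatFunc ℝ)) + Δ₁)⁻¹ with hE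
  have hdet := (Matrix.isUnit_iff_isUnit_det _).mp hU
  have hE1 : ((1 : Matrix n n (RatFunc ℝ)) + Δ₁) * E = 1 := Matrix.mul_nonsing_inv _ hdet
  have hE2 : E * ((1 : Matrix n n (RatFunc ℝ)) + Δ₁) = 1 := Matrix.nonsing_inv_mul _ hdet
  have key : Z * E + mR B * (Δ₂ * E) = Z := by
    calc Z * E + mR B * (Δ₂ * E)
        = Z * (((1 : Matrix n n (RatFunc ℝ)) + Δ₁) * E) := by
          rw [← Matrix.mul_assoc (mR B) Δ₂ E, ← hd1]
          simp only [Matrix.add_mul, Matrix.mul_add, Matrix.one_mul, Matrix.mul_assoc]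
      _ = Z := by rw [hE1, Matrix.mul_one]
  refine ⟨?_, ?_, ?_, ?_⟩
  · show Z * (E * Φhxx) - mR B * (Φhux - Δ₂ * E * Φhxx) = 1
    have h6 : Z * (E * Φhxx) - mR B * (Φhux - Δ₂ * E * Φhxx)
        = (Z * E + mR B * (Δ₂ * E)) * Φhxx - mR B * Φhux := by
      simp only [Matrix.mul_sub, Matrix.sub_mul, Matrix.add_mul, Matrix.mul_assoc]
      abel
    rw [h6, key, h₁]
  · show Z * (E * Φhxy) - mR B * (Φhuy - Δ₂ * E * Φhxy) = 0
    have h6 : Z * (E * Φhxy) - mR B * (Φhuy - Δ₂ * E * Φhxy)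
        = (Z * E + mR B * (Δ₂ * E)) * Φhxy - mR B * Φhuy := by
      simp only [Matrix.mul_sub, Matrix.sub_mul, Matrix.add_mul, Matrix.mul_assoc]
      abel
    rw [h6, key, h₂]
  · show (E * Φhxx) * Z - (E * Φhxy) * mR C = 1
    have h6 : (E * Φhxx) * Z - (E * Φhxy) * mR C
        = E * (Φhxx * Z - Φhxy * mR C) := by
      simp only [Matrix.mul_sub, Matrix.mul_assoc]
    rw [h6, h₃, hE2]
  · show (Φhux - Δ₂ * E * Φhxx) * Z - (Φhuy - Δ₂ * E * Φhxy) * mR C = 0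
    have h6 : (Φhux - Δ₂ * E * Φhxx) * Z - (Φhuy - Δ₂ * E * Φhxy) * mR C
        = (Φhux * Z - Φhuy * mR C) - Δ₂ * (E * (Φhxx * Z - Φhxy * mR C)) := by
      simp only [Matrix.mul_sub, Matrix.sub_mul, Matrix.mul_assoc]
      abel
    rw [h6, h₃, h₄, hE2, Matrix.mul_one, sub_self]

end
end
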